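/- arXiv:2110.00963 — 2 statements merged into one kernel-verified Lean document; each statement's English description precedes it below -/
import Mathlib

section
/- Let N ≥ 1, let Ω-integrals be taken over ℝ^N with Lebesgue measure, let φ : ℝ^N → ℝ be a continuously differentiable function with compact support which is not identically zero, and let f : ℝ → ℝ be continuous satisfying (f1) and (f2). Then for every p with 1 < p < min(p₀, θ) there exists a real number t_p > 0 such that t_p^{p−1} ∫_{ℝ^N} ‖∇φ(x)‖^p dx = ∫_{ℝ^N} f(t_p·φ(x))·φ(x) dx; that is, the rescaled function t_p·φ lies on the Nehari set of the p-energy functional. -/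
/-!
Write `I(t) = ∫ f(tφ) φ` and `A = ∫ ‖∇φ‖^p`; we look for a zero of `t ↦ t^(p-1) A - I(t)` on
`(0, ∞)`, where this function is continuous. Near `0`, (f1) gives `|f(s)| ≤ |s|^(p₀-1)`, so
`I(t) = O(t^(p₀-1)) = o(t^(p-1))`, and the function is positive there because `A > 0`: a nonzero
compactly supported function is not constant. For large `t`, (f2) integrates (Gronwall) to
`F(s) ≥ c |s|^θ` for `|s| ≥ 1`, hence `f(s) s ≥ θ c |s|^θ`; integrating over the open set where
`|φ| > a` gives `I(t) ≳ t^(θ-1)`, which beats `t^(p-1)` because `p < θ`. The intermediate value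
theorem concludes.
-/

open MeasureTheory Filter Real Set Topology

theorem mul_rpow_le_of_mul_le_deriv_mul {F F' : ℝ → ℝ} {θ : ℝ}
    (hF : ∀ v, 1 ≤ v → HasDerivAt F (F' v) v) (h : ∀ v, 1 ≤ v → θ * F v ≤ F' v * v)
    {u : ℝ} (hu : 1 ≤ u) : F 1 * u ^ θ ≤ F u := by
  have hG : ∀ v, 1 ≤ v → HasDerivAt (fun v => F v * v ^ (-θ))
      (v ^ (-θ - 1) * (F' v * v - θ * F v)) v := by
    intro v hv
    have hv0 : 0 < v := one_pos.trans_le hv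
    refine ((hF v hv).mul (hasDerivAt_rpow_const (p := -θ) (Or.inl hv0.ne'))).congr_deriv ?_
    rw [show -θ = (-θ - 1) + 1 by ring, rpow_add_one hv0.ne']
    ring_nf
  have hmono : MonotoneOn (fun v => F v * v ^ (-θ)) (Ici 1) := by
    refine monotoneOn_of_hasDerivWithinAt_nonneg (convex_Ici 1)
      (fun v hv => (hG v hv).continuousAt.continuousWithinAt)
      (fun v hv => (hG v (interior_subset hv)).hasDerivWithinAt) fun v hv => ?_
    have hv : 1 ≤ v := interior_subset hv
    exact mul_nonneg (rpow_nonneg (by linarith) _) (by linarith [h v hv])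
  have hu0 : 0 < u := one_pos.trans_le hu
  have := mul_le_mul_of_nonneg_right (hmono self_mem_Ici hu hu) (rpow_nonneg hu0.le θ)
  simpa [mul_assoc, ← rpow_add hu0] using this

theorem min_mul_rpow_le_integral {f : ℝ → ℝ} (hf : Continuous f) {θ : ℝ}
    (h : ∀ s, 1 ≤ |s| → θ * (∫ r in (0:ℝ)..s, f r) ≤ f s * s) {s : ℝ} (hs : 1 ≤ |s|) :
    min (∫ r in (0:ℝ)..1, f r) (∫ r in (0:ℝ)..(-1), f r) * |s| ^ θ ≤ ∫ r in (0:ℝ)..s, f r := by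
  set F : ℝ → ℝ := fun s => ∫ r in (0:ℝ)..s, f r
  have hF : ∀ s, HasDerivAt F (f s) s := fun s => (hf.integral_hasStrictDerivAt 0 s).hasDerivAt
  rcases le_or_gt 0 s with hs0 | hs0
  · rw [abs_of_nonneg hs0] at hs ⊢
    refine le_trans ?_ (mul_rpow_le_of_mul_le_deriv_mul (fun v _ => hF v)
      (fun v hv => h v (by rwa [abs_of_nonneg (by linarith)])) hs)
    exact mul_le_mul_of_nonneg_right (min_le_left _ _) (rpow_nonneg (by linarith) _)
  · rw [abs_of_neg hs0] at hs ⊢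
    have hreflect : ∀ v, HasDerivAt (fun v => F (-v)) (-f (-v)) v := fun v => by
      simpa [Function.comp_def] using (hF (-v)).comp v (hasDerivAt_neg v)
    have key := mul_rpow_le_of_mul_le_deriv_mul (fun v _ => hreflect v)
      (fun v hv => by
        have := h (-v) (by rw [abs_neg, abs_of_nonneg (by linarith)]; exact hv)
        linarith) hs
    simp only [neg_neg] at key
    exact le_trans (mul_le_mul_of_nonneg_right (min_le_right _ _) (rpow_nonneg (by linarith) _)) key

theorem exists_pos_mul_rpow_le_apply_mul_self {f : ℝ → ℝ} (hf : Continuous f) {θ : ℝ}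
    (hθ : 0 < θ) (hf2 : ∀ t : ℝ, t ≠ 0 →
      0 < θ * (∫ s in (0:ℝ)..t, f s) ∧ θ * (∫ s in (0:ℝ)..t, f s) ≤ f t * t) :
    ∃ b > 0, ∀ s, 1 ≤ |s| → b * |s| ^ θ ≤ f s * s := by
  have hF : ∀ t : ℝ, t ≠ 0 → 0 < ∫ s in (0:ℝ)..t, f s := fun t ht =>
    pos_of_mul_pos_right (hf2 t ht).1 hθ.le
  refine ⟨θ * min (∫ s in (0:ℝ)..1, f s) (∫ s in (0:ℝ)..(-1), f s),
    mul_pos hθ (lt_min (hF 1 one_ne_zero) (hF (-1) (by norm_num))), fun s hs => ?_⟩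
  have hne : ∀ s : ℝ, 1 ≤ |s| → s ≠ 0 := fun s hs => abs_pos.mp (one_pos.trans_le hs)
  have hmin := min_mul_rpow_le_integral hf (fun s hs => (hf2 s (hne s hs)).2) hs
  calc _ = θ * (min (∫ s in (0:ℝ)..1, f s) (∫ s in (0:ℝ)..(-1), f s) * |s| ^ θ) := by ring
    _ ≤ θ * ∫ r in (0:ℝ)..s, f r := mul_le_mul_of_nonneg_left hmin hθ.le
    _ ≤ f s * s := (hf2 s (hne s hs)).2

theorem exists_abs_le_rpow_of_tendsto_div {f : ℝ → ℝ} {q : ℝ}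
    (hf : Tendsto (fun t => f t / |t| ^ q) (𝓝[≠] 0) (𝓝 0)) :
    ∃ δ > 0, ∀ s, s ≠ 0 → |s| < δ → |f s| ≤ |s| ^ q := by
  obtain ⟨δ, hδ, hfδ⟩ := Metric.tendsto_nhdsWithin_nhds.mp hf 1 one_pos
  refine ⟨δ, hδ, fun s hs hsδ => ?_⟩
  have hpos : 0 < |s| ^ q := rpow_pos_of_pos (abs_pos.mpr hs) q
  have := hfδ hs (by rwa [Real.dist_eq, sub_zero])
  rw [Real.dist_eq, sub_zero, abs_div, abs_of_pos hpos, div_lt_one hpos] at this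
  exact this.le

theorem eventually_rpow_mul_lt_rpow_mul_nhdsGT_zero {r q : ℝ} (hrq : r < q) (K : ℝ) {A : ℝ}
    (hA : 0 < A) : ∀ᶠ t in 𝓝[>] 0, t ^ q * K < t ^ r * A := by
  have hlim : Tendsto (fun t : ℝ => t ^ (q - r) * K) (𝓝[>] 0) (𝓝 0) := by
    have := ((continuousAt_rpow_const 0 (q - r) (Or.inr (by linarith))).tendsto.mul_const K)
    rw [zero_rpow (by linarith), zero_mul] at this
    exact this.mono_left nhdsWithin_le_nhds
  filter_upwards [hlim.eventually_lt_const hA, self_mem_nhdsWithin] with t ht (ht0 : 0 < t)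
  calc t ^ q * K = t ^ r * (t ^ (q - r) * K) := by
        rw [← mul_assoc, ← rpow_add ht0, add_sub_cancel]
    _ < t ^ r * A := mul_lt_mul_of_pos_left ht (rpow_pos_of_pos ht0 r)

theorem eventually_rpow_mul_lt_rpow_mul_atTop {r q : ℝ} (hrq : r < q) (A : ℝ) {K : ℝ}
    (hK : 0 < K) : ∀ᶠ t in atTop, t ^ r * A < t ^ q * K := by
  have hlim : Tendsto (fun t : ℝ => t ^ (q - r) * K) atTop atTop :=
    (tendsto_rpow_atTop (by linarith)).atTop_mul_const hK
  filter_upwards [hlim.eventually_gt_atTop A, eventually_gt_atTop 0] with t ht ht0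
  calc t ^ r * A < t ^ r * (t ^ (q - r) * K) := mul_lt_mul_of_pos_left ht (rpow_pos_of_pos ht0 r)
    _ = t ^ q * K := by rw [← mul_assoc, ← rpow_add ht0, add_sub_cancel]

theorem exists_pos_eq_of_eventually_gt_of_eventually_lt {g h : ℝ → ℝ}
    (hg : ContinuousOn g (Ioi 0)) (hh : ContinuousOn h (Ioi 0))
    (h0 : ∀ᶠ t in 𝓝[>] 0, h t < g t) (htop : ∀ᶠ t in atTop, g t < h t) :
    ∃ t, 0 < t ∧ g t = h t := by
  obtain ⟨t₁, ht₁, ht₁0 : 0 < t₁⟩ := (h0.and self_mem_nhdsWithin).exists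
  obtain ⟨t₂, ht₂, ht₁₂⟩ := (htop.and (eventually_ge_atTop t₁)).exists
  have hcont : ContinuousOn (fun t => g t - h t) (Icc t₁ t₂) :=
    (hg.sub hh).mono fun t ht => ht₁0.trans_le ht.1
  obtain ⟨t, ht, hgt⟩ := intermediate_value_Icc' ht₁₂ hcont
    (show (0 : ℝ) ∈ Icc (g t₂ - h t₂) (g t₁ - h t₁) from ⟨by linarith, by linarith⟩)
  exact ⟨t, ht₁0.trans_le ht.1, sub_eq_zero.mp hgt⟩

theorem HasCompactSupport.exists_fderiv_ne_zero {E : Type*} [NormedAddCommGroup E]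
    [NormedSpace ℝ E] [Nontrivial E] {φ : E → ℝ} (hφ : Differentiable ℝ φ)
    (hφc : HasCompactSupport φ) (hφ0 : φ ≠ 0) : ∃ x, fderiv ℝ φ x ≠ 0 := by
  by_contra! h
  obtain ⟨y, hy⟩ := (Set.ne_univ_iff_exists_notMem _).mp hφc.isCompact.ne_univ
  exact hφ0 (funext fun x =>
    (is_const_of_fderiv_eq_zero hφ h x y).trans (image_eq_zero_of_notMem_tsupport hy))

theorem integral_norm_gradient_rpow_pos {E : Type*} [NormedAddCommGroup E]
    [InnerProductSpace ℝ E] [CompleteSpace E] [Nontrivial E] [MeasurableSpace E]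
    [OpensMeasurableSpace E] {μ : Measure E} [μ.IsOpenPosMeasure] [IsFiniteMeasureOnCompacts μ]
    {φ : E → ℝ} (hφ : ContDiff ℝ 1 φ) (hφc : HasCompactSupport φ) (hφ0 : φ ≠ 0) {p : ℝ}
    (hp : 0 < p) :
    0 < ∫ x, ‖gradient φ x‖ ^ p ∂μ := by
  have hgrad : Continuous (gradient φ) :=
    (InnerProductSpace.toDual ℝ E).symm.continuous.comp (hφ.continuous_fderiv one_ne_zero)
  have hgradc : HasCompactSupport (gradient φ) :=
    hφc.fderiv (𝕜 := ℝ) |>.comp_left (g := (InnerProductSpace.toDual ℝ E).symm) (map_zero _)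
  obtain ⟨x₀, hx₀⟩ := hφc.exists_fderiv_ne_zero (hφ.differentiable one_ne_zero) hφ0
  have hgrad₀ : gradient φ x₀ ≠ 0 := by
    rwa [gradient, ne_eq, LinearIsometryEquiv.map_eq_zero_iff]
  have hcont : Continuous fun x => ‖gradient φ x‖ ^ p := hgrad.norm.rpow_const fun _ => Or.inr hp.le
  exact hcont.integral_pos_of_hasCompactSupport_nonneg_nonzero
    (hgradc.comp_left (g := fun v => ‖v‖ ^ p) (by simp [zero_rpow hp.ne']))
    (fun x => rpow_nonneg (norm_nonneg _) p) (x := x₀)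
    (rpow_pos_of_pos (norm_pos_iff.mpr hgrad₀) p).ne'

section
variable {X : Type*} [TopologicalSpace X] {φ : X → ℝ}

theorem setOf_lt_abs_subset_tsupport {a : ℝ} (ha : 0 ≤ a) : {x | a < |φ x|} ⊆ tsupport φ :=
  fun x hx => subset_tsupport φ fun h0 => by
    change a < |φ x| at hx; rw [h0, abs_zero] at hx; linarith

variable [MeasurableSpace X] {μ : Measure X} {f : ℝ → ℝ}

theorem integral_comp_mul_mul_eq_setIntegral_tsupport (t : ℝ) :
    ∫ x, f (t * φ x) * φ x ∂μ = ∫ x in tsupport φ, f (t * φ x) * φ x ∂μ :=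
  (setIntegral_eq_integral_of_forall_compl_eq_zero fun x hx => by
    rw [image_eq_zero_of_notMem_tsupport hx, mul_zero]).symm

theorem continuous_integral_comp_mul_mul [OpensMeasurableSpace X] [IsLocallyFiniteMeasure μ]
    (hf : Continuous f) (hφ : Continuous φ) (hφc : HasCompactSupport φ) :
    Continuous fun t => ∫ x, f (t * φ x) * φ x ∂μ := by
  refine (continuous_parametric_integral_of_continuous (μ := μ) (by fun_prop) hφc).congr
    fun t => (integral_comp_mul_mul_eq_setIntegral_tsupport t).symm

theorem integrable_comp_mul_mul [OpensMeasurableSpace X] [IsFiniteMeasureOnCompacts μ]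
    (hf : Continuous f) (hφ : Continuous φ) (hφc : HasCompactSupport φ) (t : ℝ) :
    Integrable (fun x => f (t * φ x) * φ x) μ :=
  (by fun_prop : Continuous fun x => f (t * φ x) * φ x).integrable_of_hasCompactSupport
    hφc.mul_left

theorem abs_integral_comp_mul_mul_le [IsFiniteMeasureOnCompacts μ] {q δ C t : ℝ}
    (hq : 0 ≤ q) (hfδ : ∀ s, s ≠ 0 → |s| < δ → |f s| ≤ |s| ^ q) (hφc : HasCompactSupport φ)
    (hC : ∀ x, |φ x| ≤ C) (ht : 0 < t) (htC : t * C < δ) :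
    |∫ x, f (t * φ x) * φ x ∂μ| ≤ t ^ q * (C ^ q * C * μ.real (tsupport φ)) := by
  rw [integral_comp_mul_mul_eq_setIntegral_tsupport, ← mul_assoc, ← mul_assoc, ← Real.norm_eq_abs]
  refine norm_setIntegral_le_of_norm_le_const (hφc.isCompact.measure_lt_top (μ := μ)) fun x _ => ?_
  have hC0 : 0 ≤ C := (abs_nonneg _).trans (hC x)
  rw [Real.norm_eq_abs, abs_mul, ← mul_rpow ht.le hC0]
  rcases eq_or_ne (φ x) 0 with h0 | h0
  · rw [h0, abs_zero, mul_zero]; positivity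
  have htφ : |t * φ x| ≤ t * C := by
    rw [abs_mul, abs_of_pos ht]; exact mul_le_mul_of_nonneg_left (hC x) ht.le
  calc |f (t * φ x)| * |φ x| ≤ |t * φ x| ^ q * C :=
        mul_le_mul (hfδ _ (mul_ne_zero ht.ne' h0) (htφ.trans_lt htC)) (hC x) (abs_nonneg _)
          (by positivity)
    _ ≤ (t * C) ^ q * C := by gcongr

theorem le_integral_comp_mul_mul [OpensMeasurableSpace X] [IsFiniteMeasureOnCompacts μ]
    {θ b a t : ℝ} (hf : Continuous f) (hφ : Continuous φ) (hφc : HasCompactSupport φ)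
    (hθ : 0 ≤ θ) (hb : 0 ≤ b) (hfs : ∀ s, 0 ≤ f s * s)
    (hgrowth : ∀ s, 1 ≤ |s| → b * |s| ^ θ ≤ f s * s)
    (ha : 0 < a) (hta : 1 ≤ t * a) :
    μ.real {x | a < |φ x|} * (b * a ^ θ * t ^ (θ - 1)) ≤ ∫ x, f (t * φ x) * φ x ∂μ := by
  have ht : 0 < t := pos_of_mul_pos_left (one_pos.trans_le hta) ha.le
  have hint := integrable_comp_mul_mul (μ := μ) hf hφ hφc t
  have hpoint : ∀ x, f (t * φ x) * φ x * t = f (t * φ x) * (t * φ x) := fun x => by ring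
  have hnonneg : ∀ x, 0 ≤ f (t * φ x) * φ x := fun x =>
    nonneg_of_mul_nonneg_left (by rw [hpoint]; exact hfs _) ht
  have hU : IsOpen {x | a < |φ x|} := isOpen_lt continuous_const hφ.abs
  have hUK := setOf_lt_abs_subset_tsupport (φ := φ) ha.le
  calc μ.real {x | a < |φ x|} * (b * a ^ θ * t ^ (θ - 1))
      ≤ ∫ x in {x | a < |φ x|}, f (t * φ x) * φ x ∂μ := by
        refine setIntegral_ge_of_const_le hU.measurableSet
          (measure_mono hUK |>.trans_lt hφc.isCompact.measure_lt_top).ne (fun x hx => ?_)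
          hint.integrableOn
        change a < |φ x| at hx
        have htφ : t * a ≤ |t * φ x| := by
          rw [abs_mul, abs_of_pos ht]; exact mul_le_mul_of_nonneg_left hx.le ht.le
        refine le_of_mul_le_mul_right ?_ ht
        calc b * a ^ θ * t ^ (θ - 1) * t = b * (t * a) ^ θ := by
              rw [mul_rpow ht.le ha.le, mul_assoc, mul_assoc, rpow_sub_one ht.ne',
                div_mul_cancel₀ _ ht.ne']; ring
          _ ≤ b * |t * φ x| ^ θ := by gcongr
          _ ≤ f (t * φ x) * φ x * t := by rw [hpoint]; exact hgrowth _ (hta.trans htφ)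
    _ ≤ ∫ x, f (t * φ x) * φ x ∂μ :=
        setIntegral_le_integral hint (Eventually.of_forall hnonneg)

theorem eventually_integral_comp_mul_mul_lt_nhdsGT_zero [IsFiniteMeasureOnCompacts μ]
    {q r A : ℝ} (hq : 0 ≤ q) (hrq : r < q)
    (hf : Tendsto (fun t => f t / |t| ^ q) (𝓝[≠] 0) (𝓝 0)) (hφ : Continuous φ)
    (hφc : HasCompactSupport φ) (hA : 0 < A) :
    ∀ᶠ t in 𝓝[>] 0, ∫ x, f (t * φ x) * φ x ∂μ < t ^ r * A := by
  obtain ⟨δ, hδ, hfδ⟩ := exists_abs_le_rpow_of_tendsto_div hf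
  obtain ⟨C, hC⟩ := hφc.exists_bound_of_continuous hφ
  have hsmall : ∀ᶠ t in 𝓝[>] 0, t * C < δ := by
    have : Tendsto (fun t : ℝ => t * C) (𝓝[>] 0) (𝓝 0) := by
      simpa using ((continuous_mul_const C).tendsto 0).mono_left nhdsWithin_le_nhds
    exact this.eventually_lt_const hδ
  filter_upwards [hsmall, self_mem_nhdsWithin,
    eventually_rpow_mul_lt_rpow_mul_nhdsGT_zero hrq (C ^ q * C * μ.real (tsupport φ)) hA]
    with t htC (ht : 0 < t) hlt
  exact (le_abs_self _).trans_lt <|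
    (abs_integral_comp_mul_mul_le hq hfδ hφc hC ht htC).trans_lt hlt

theorem eventually_lt_integral_comp_mul_mul_atTop [OpensMeasurableSpace X]
    [IsFiniteMeasureOnCompacts μ] [μ.IsOpenPosMeasure] {θ b r A : ℝ}
    (hf : Continuous f) (hφ : Continuous φ) (hφc : HasCompactSupport φ) (hφ0 : φ ≠ 0)
    (hθ : 0 ≤ θ) (hb : 0 < b) (hfs : ∀ s, 0 ≤ f s * s)
    (hgrowth : ∀ s, 1 ≤ |s| → b * |s| ^ θ ≤ f s * s) (hr : r < θ - 1) :
    ∀ᶠ t in atTop, t ^ r * A < ∫ x, f (t * φ x) * φ x ∂μ := by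
  obtain ⟨x₀, hx₀⟩ := Function.ne_iff.mp hφ0
  set a := |φ x₀| / 2
  have ha : 0 < a := half_pos (abs_pos.mpr hx₀)
  have hU : 0 < μ.real {x | a < |φ x|} := by
    refine ENNReal.toReal_pos ((isOpen_lt continuous_const hφ.abs).measure_ne_zero μ
      ⟨x₀, half_lt_self (abs_pos.mpr hx₀)⟩) ?_
    exact ((measure_mono (setOf_lt_abs_subset_tsupport ha.le)).trans_lt
      hφc.isCompact.measure_lt_top).ne
  filter_upwards [eventually_ge_atTop a⁻¹, eventually_rpow_mul_lt_rpow_mul_atTop hr A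
    (by positivity : 0 < μ.real {x | a < |φ x|} * (b * a ^ θ))] with t hta hlt
  refine hlt.trans_le ?_
  calc t ^ (θ - 1) * (μ.real {x | a < |φ x|} * (b * a ^ θ))
      = μ.real {x | a < |φ x|} * (b * a ^ θ * t ^ (θ - 1)) := by ring
    _ ≤ _ := le_integral_comp_mul_mul hf hφ hφc hθ hb.le hfs hgrowth ha
        ((inv_le_iff_one_le_mul₀ ha).mp hta)
end

theorem nehari_scaling_exists_general (N : ℕ) (hN : 1 ≤ N)
    (φ : EuclideanSpace ℝ (Fin N) → ℝ)
    (hφ : ContDiff ℝ 1 φ) (hφc : HasCompactSupport φ) (hφ0 : φ ≠ 0)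
    (f : ℝ → ℝ) (hf : Continuous f)
    (p₀ : ℝ)
    (hf1 : Tendsto (fun t : ℝ => f t / |t| ^ (p₀ - 1)) (nhdsWithin 0 {0}ᶜ) (nhds 0))
    (θ : ℝ)
    (hf2 : ∀ t : ℝ, t ≠ 0 →
      0 < θ * (∫ s in (0:ℝ)..t, f s) ∧ θ * (∫ s in (0:ℝ)..t, f s) ≤ f t * t)
    (p : ℝ) (hp1 : 1 < p) (hp2 : p < min p₀ θ) :
    ∃ tp : ℝ, 0 < tp ∧
      tp ^ (p - 1) * (∫ x, ‖gradient φ x‖ ^ p) = ∫ x, f (tp * φ x) * φ x := by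
  have hpp₀ : p < p₀ := hp2.trans_le (min_le_left _ _)
  have hpθ : p < θ := hp2.trans_le (min_le_right _ _)
  -- makes `EuclideanSpace ℝ (Fin N)` nontrivial, hence noncompact
  have : Nonempty (Fin N) := ⟨⟨0, hN⟩⟩
  have hA := integral_norm_gradient_rpow_pos (μ := volume) hφ hφc hφ0 (by linarith : 0 < p)
  obtain ⟨b, hb, hgrowth⟩ := exists_pos_mul_rpow_le_apply_mul_self hf (by linarith) hf2
  have hfs : ∀ s, 0 ≤ f s * s := fun s => by
    rcases eq_or_ne s 0 with rfl | hs
    · simp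
    · exact ((hf2 s hs).1.trans_le (hf2 s hs).2).le
  refine exists_pos_eq_of_eventually_gt_of_eventually_lt
    ((continuousOn_id.rpow_const fun t ht => Or.inl (ne_of_gt ht)).mul continuousOn_const)
    (continuous_integral_comp_mul_mul hf hφ.continuous hφc).continuousOn ?_ ?_
  · exact eventually_integral_comp_mul_mul_lt_nhdsGT_zero (r := p - 1) (by linarith)
      (by linarith) hf1 hφ.continuous hφc hA
  · exact eventually_lt_integral_comp_mul_mul_atTop (r := p - 1) hf hφ.continuous hφc hφ0
      (by linarith) hb hfs hgrowth (by linarith)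

/-- For `f` continuous satisfying (f1) and (f2) and a nonzero compactly supported `C¹`
radial-free test function `φ`, for every `1 < p < min p₀ θ` there is `t_p > 0` putting
`t_p • φ` on the Nehari set of the `p`-energy. -/
theorem nehari_scaling_exists (N : ℕ) (hN : 1 ≤ N)
    (φ : EuclideanSpace ℝ (Fin N) → ℝ)
    (hφ : ContDiff ℝ 1 φ) (hφc : HasCompactSupport φ) (hφ0 : φ ≠ 0)
    (f : ℝ → ℝ) (hf : Continuous f)
    (p₀ : ℝ) (hp₀1 : 1 < p₀) (hp₀2 : p₀ < 2)
    (hf1 : Tendsto (fun t : ℝ => f t / |t| ^ (p₀ - 1)) (nhdsWithin 0 {0}ᶜ) (nhds 0))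
    (θ : ℝ) (hθ : 1 < θ)
    (hf2 : ∀ t : ℝ, t ≠ 0 →
      0 < θ * (∫ s in (0:ℝ)..t, f s) ∧ θ * (∫ s in (0:ℝ)..t, f s) ≤ f t * t)
    (p : ℝ) (hp1 : 1 < p) (hp2 : p < min p₀ θ) :
    ∃ tp : ℝ, 0 < tp ∧
      tp ^ (p - 1) * (∫ x, ‖gradient φ x‖ ^ p) = ∫ x, f (tp * φ x) * φ x :=
  nehari_scaling_exists_general N hN φ hφ hφc hφ0 f hf p₀ hf1 θ hf2 p hp1 hp2
end

section
/- Let μ be a measure on a measurable space X, let f : ℝ → ℝ be continuous satisfying (f2) with exponent θ > 1, let 1 < p < θ, and let u : X → ℝ be measurable such that x ↦ F(u(x)) and x ↦ f(u(x))·u(x) are integrable. If A is a real number with A ≥ ∫_X f(u(x))·u(x) dμ(x), then A/p − ∫_X F(u(x)) dμ(x) ≥ (1/p − 1/θ)·A. -/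
open MeasureTheory

theorem intervalIntegral_le_mul_self_div_of_ambrosetti_rabinowitz {f : ℝ → ℝ} {θ : ℝ}
    (hθ : 0 < θ) (hf2 : ∀ t : ℝ, t ≠ 0 → θ * (∫ s in (0:ℝ)..t, f s) ≤ f t * t) (t : ℝ) :
    (∫ s in (0:ℝ)..t, f s) ≤ f t * t / θ := by
  rcases eq_or_ne t 0 with rfl | ht
  · simp
  · rw [le_div_iff₀ hθ, mul_comm]
    exact hf2 t ht

theorem integral_primitive_comp_le_div {X : Type*} [MeasurableSpace X] {μ : Measure X}
    {f : ℝ → ℝ} {θ : ℝ} (hθ : 0 < θ)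
    (hf2 : ∀ t : ℝ, t ≠ 0 → θ * (∫ s in (0:ℝ)..t, f s) ≤ f t * t) {u : X → ℝ}
    (hFint : Integrable (fun x => ∫ s in (0:ℝ)..(u x), f s) μ)
    (hfu : Integrable (fun x => f (u x) * u x) μ) :
    (∫ x, (∫ s in (0:ℝ)..(u x), f s) ∂μ) ≤ (∫ x, f (u x) * u x ∂μ) / θ := by
  rw [← integral_div]
  exact integral_mono hFint (hfu.div_const θ) fun x =>
    intervalIntegral_le_mul_self_div_of_ambrosetti_rabinowitz hθ hf2 (u x)

theorem potential_well_coercivity_general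
    {X : Type*} [MeasurableSpace X] (μ : Measure X)
    (f : ℝ → ℝ)
    (θ : ℝ) (hθ : 1 < θ)
    (hf2 : ∀ t : ℝ, t ≠ 0 →
      0 < θ * (∫ s in (0:ℝ)..t, f s) ∧ θ * (∫ s in (0:ℝ)..t, f s) ≤ f t * t)
    (p : ℝ)
    (u : X → ℝ)
    (hFint : Integrable (fun x => ∫ s in (0:ℝ)..(u x), f s) μ)
    (hfu : Integrable (fun x => f (u x) * u x) μ)
    (A : ℝ) (hA : (∫ x, f (u x) * u x ∂μ) ≤ A) :
    (1 / p - 1 / θ) * A ≤ A / p - ∫ x, (∫ s in (0:ℝ)..(u x), f s) ∂μ := by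
  have hθ0 : 0 < θ := zero_lt_one.trans hθ
  have hF : (∫ x, (∫ s in (0:ℝ)..(u x), f s) ∂μ) ≤ A / θ :=
    (integral_primitive_comp_le_div hθ0 (fun t ht => (hf2 t ht).2) hFint hfu).trans
      (div_le_div_of_nonneg_right hA hθ0.le)
  calc (1 / p - 1 / θ) * A = A / p - A / θ := by ring
    _ ≤ A / p - ∫ x, (∫ s in (0:ℝ)..(u x), f s) ∂μ := by linarith

/-- Potential-well coercivity: under (f2) with `1 < p < θ`, if
`A ≥ ∫ f(u)u` then `A/p - ∫ F(u) ≥ (1/p - 1/θ) A`, where `F(t) = ∫₀^t f`. -/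
theorem potential_well_coercivity
    {X : Type*} [MeasurableSpace X] (μ : Measure X)
    (f : ℝ → ℝ) (hf : Continuous f)
    (θ : ℝ) (hθ : 1 < θ)
    (hf2 : ∀ t : ℝ, t ≠ 0 →
      0 < θ * (∫ s in (0:ℝ)..t, f s) ∧ θ * (∫ s in (0:ℝ)..t, f s) ≤ f t * t)
    (p : ℝ) (hp1 : 1 < p) (hpθ : p < θ)
    (u : X → ℝ)
    (hFint : Integrable (fun x => ∫ s in (0:ℝ)..(u x), f s) μ)
    (hfu : Integrable (fun x => f (u x) * u x) μ)
    (A : ℝ) (hA : (∫ x, f (u x) * u x ∂μ) ≤ A) :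
    (1 / p - 1 / θ) * A ≤ A / p - ∫ x, (∫ s in (0:ℝ)..(u x), f s) ∂μ :=
  potential_well_coercivity_general μ f θ hθ hf2 p u hFint hfu A hA
end
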